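/- Let d ≥ 2, ε ∈ (0,1], and let p, q be probability vectors in Δ_d with (1/2)‖p − q‖₁ ≤ ε and H(p) ≥ H(q). Then H(p) − H(q) ≤ ε log₂(d−1) + h(ε) if ε < 1 − 1/d, and H(p) − H(q) ≤ log₂ d if ε ≥ 1 − 1/d. Moreover, equality occurs if and only if there is a permutation π of {1,…,d} such that π(q) = (1,0,…,0) and either (1) ε < 1 − 1/d and π(p) = (1−ε, ε/(d−1), …, ε/(d−1)), or (2) ε ≥ 1 − 1/d and p = (1/d, …, 1/d). -/

import Mathlib

open scoped BigOperators

noncomputable section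

/-- The Shannon entropy (base 2) of a vector, with `0 log₂ 0 = 0`. -/
noncomputable def shEnt {d : ℕ} (p : Fin d → ℝ) : ℝ :=
  -∑ i, p i * Real.logb 2 (p i)

/-- The binary entropy `h(ε) = −ε log₂ ε − (1−ε) log₂(1−ε)`. -/
noncomputable def binEnt (ε : ℝ) : ℝ :=
  -(ε * Real.logb 2 ε) - (1 - ε) * Real.logb 2 (1 - ε)

/-- The Audenaert–Fannes bound. -/
noncomputable def AF (d : ℕ) (ε : ℝ) : ℝ :=
  if ε < 1 - 1 / d then ε * Real.logb 2 ((d : ℝ) - 1) + binEnt ε else Real.logb 2 d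

/-!
Write `η x = -x log x`, `m = min p q` for the overlap of the two vectors and `a = p - m`, so that
`p = m + a`, `∑ a = t` is the total variation distance, and `a` vanishes at some index `j`
(any `j` with `p j ≤ q j`). Subadditivity of `η` gives `H(p) ≤ H(m) + H(a)`; the tangent-line
bound `log x ≤ x - 1` gives `H(m) - H(q) ≤ η(1 - t)`; and Jensen's inequality on the `d - 1`
indices other than `j` gives `H(a) ≤ t log(d - 1) + η t`. Together,
`H(p) - H(q) ≤ t log(d - 1) + h(t)`, the `d`-ary entropy of `t`, which increases on
`[0, 1 - 1/d]`. Beyond `1 - 1/d` the bound `log d` is the maximum of `H(p)` minus the minimum `0`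
of `H(q)`. The equality cases come from the equality cases of subadditivity and of Jensen.
-/

-- `open Real` would turn the binder `π` of the final statement into `Real.pi`.
section

open Finset Real

namespace Real

theorem negMulLog_add_le {x y : ℝ} (hx : 0 ≤ x) (hy : 0 ≤ y) :
    negMulLog (x + y) ≤ negMulLog x + negMulLog y := by
  rcases hx.eq_or_lt with rfl | hx
  · simp
  rcases hy.eq_or_lt with rfl | hy
  · simp
  have hlx : log x ≤ log (x + y) := log_le_log hx (by linarith)
  have hly : log y ≤ log (x + y) := log_le_log hy (by linarith)
  simp only [negMulLog]
  nlinarith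

theorem negMulLog_add_lt {x y : ℝ} (hx : 0 < x) (hy : 0 < y) :
    negMulLog (x + y) < negMulLog x + negMulLog y := by
  have hlx : log x < log (x + y) := log_lt_log hx (by linarith)
  have hly : log y < log (x + y) := log_lt_log hy (by linarith)
  simp only [negMulLog]
  nlinarith

theorem negMulLog_eq_zero_iff {x : ℝ} (hx : 0 ≤ x) : negMulLog x = 0 ↔ x = 0 ∨ x = 1 := by
  rw [negMulLog, neg_mul, neg_eq_zero, mul_eq_zero, log_eq_zero]
  constructor
  · rintro (h | h | h | h)
    exacts [Or.inl h, Or.inl h, Or.inr h, absurd h (by linarith)]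
  · rintro (h | h) <;> simp [h]

theorem mul_negMulLog_div {c : ℝ} (hc : c ≠ 0) (x : ℝ) :
    c * negMulLog (x / c) = x * log c + negMulLog x := by
  rw [div_eq_mul_inv, negMulLog_mul]
  simp only [negMulLog, log_inv]
  field_simp
  ring

theorem negMulLog_sub_negMulLog_le {m q c : ℝ} (hm : 0 ≤ m) (hmq : m ≤ q) (hq : q ≤ 1)
    (hc : 0 < c) : negMulLog m - negMulLog q ≤ q * c - m - m * log c := by
  rcases hm.eq_or_lt with rfl | hm
  · have := negMulLog_nonneg hmq hq
    simp only [negMulLog_zero]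
    nlinarith
  have hq0 : 0 < q := hm.trans_le hmq
  -- `q log q ≤ m log q` and the tangent line `log x ≤ x - 1` at `x = q c / m`
  have hlogq : (q - m) * log q ≤ 0 := mul_nonpos_of_nonneg_of_nonpos (by linarith)
    (log_nonpos hq0.le hq)
  have htangent : log (q * c / m) ≤ q * c / m - 1 := log_le_sub_one_of_pos (by positivity)
  rw [log_div (by positivity) hm.ne', log_mul hq0.ne' hc.ne'] at htangent
  have := mul_le_mul_of_nonneg_left htangent hm.le
  rw [show m * (q * c / m - 1) = q * c - m by field_simp] at this
  simp only [negMulLog]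
  nlinarith

end Real

variable {ι : Type*}

theorem sum_negMulLog_le (s : Finset ι) {a : ι → ℝ} (ha : ∀ i ∈ s, 0 ≤ a i) :
    ∑ i ∈ s, negMulLog (a i) ≤ (∑ i ∈ s, a i) * log #s + negMulLog (∑ i ∈ s, a i) := by
  rcases s.eq_empty_or_nonempty with rfl | hs
  · simp
  have hcard : (#s : ℝ) ≠ 0 := by positivity
  have hjensen := concaveOn_negMulLog.le_map_sum (t := s) (w := fun _ => (#s : ℝ)⁻¹) (p := a)
    (fun _ _ => by positivity) (by simp [hcard]) ha
  simp only [smul_eq_mul, ← div_eq_inv_mul, ← sum_div] at hjensen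
  rw [← mul_negMulLog_div hcard, ← div_le_iff₀' (by positivity)]
  exact hjensen

theorem sum_negMulLog_eq_iff (s : Finset ι) {a : ι → ℝ} (ha : ∀ i ∈ s, 0 ≤ a i) :
    ∑ i ∈ s, negMulLog (a i) = (∑ i ∈ s, a i) * log #s + negMulLog (∑ i ∈ s, a i) ↔
      ∀ i ∈ s, a i = (∑ j ∈ s, a j) / #s := by
  rcases s.eq_empty_or_nonempty with rfl | hs
  · simp
  have hcard : (#s : ℝ) ≠ 0 := by positivity
  have hjensen := strictConcaveOn_negMulLog.map_sum_eq_iff (t := s) (w := fun _ => (#s : ℝ)⁻¹)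
    (p := a) (fun _ _ => by positivity) (by simp [hcard]) ha
  simp only [smul_eq_mul, ← div_eq_inv_mul, ← sum_div] at hjensen
  rw [← hjensen, ← mul_negMulLog_div hcard, eq_div_iff hcard, mul_comm, eq_comm]

section Fintype

variable [Fintype ι] {p : ι → ℝ}

theorem sum_negMulLog_le_log_card (hp : ∀ i, 0 ≤ p i) (hp1 : ∑ i, p i = 1) :
    ∑ i, negMulLog (p i) ≤ log (Fintype.card ι) := by
  simpa [hp1] using sum_negMulLog_le univ fun i _ => hp i

theorem sum_negMulLog_eq_log_card_iff (hp : ∀ i, 0 ≤ p i) (hp1 : ∑ i, p i = 1) :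
    ∑ i, negMulLog (p i) = log (Fintype.card ι) ↔ ∀ i, p i = 1 / Fintype.card ι := by
  simpa [hp1] using sum_negMulLog_eq_iff univ fun i _ => hp i

theorem apply_le_one_of_sum_eq_one (hp : ∀ i, 0 ≤ p i) (hp1 : ∑ i, p i = 1) (i : ι) : p i ≤ 1 :=
  hp1 ▸ single_le_sum (fun j _ => hp j) (mem_univ i)

theorem sum_negMulLog_nonneg (hp : ∀ i, 0 ≤ p i) (hp1 : ∑ i, p i = 1) :
    0 ≤ ∑ i, negMulLog (p i) :=
  sum_nonneg fun i _ => negMulLog_nonneg (hp i) (apply_le_one_of_sum_eq_one hp hp1 i)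

variable [DecidableEq ι]

theorem sum_negMulLog_eq_zero_iff (hp : ∀ i, 0 ≤ p i) (hp1 : ∑ i, p i = 1) :
    ∑ i, negMulLog (p i) = 0 ↔ ∃ j, ∀ i, p i = if i = j then 1 else 0 := by
  refine ⟨fun h => ?_, fun ⟨j, hj⟩ => by simp [hj, apply_ite negMulLog]⟩
  have h01 : ∀ i, p i = 0 ∨ p i = 1 := fun i => (negMulLog_eq_zero_iff (hp i)).1
    ((sum_eq_zero_iff_of_nonneg fun i _ =>
      negMulLog_nonneg (hp i) (apply_le_one_of_sum_eq_one hp hp1 i)).1 h i (mem_univ i))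
  obtain ⟨j, -, hj⟩ := exists_ne_zero_of_sum_ne_zero (hp1 ▸ one_ne_zero : ∑ i, p i ≠ 0)
  have hpj : p j = 1 := (h01 j).resolve_left hj
  have hrest : ∑ i ∈ univ.erase j, p i = 0 := by
    linarith [add_sum_erase univ p (mem_univ j)]
  refine ⟨j, fun i => ?_⟩
  split_ifs with hi
  · rw [hi, hpj]
  · exact (sum_eq_zero_iff_of_nonneg fun i _ => hp i).1 hrest i (mem_erase.2 ⟨hi, mem_univ i⟩)

theorem sum_apply_ite_eq (f : ℝ → ℝ) (j : ι) (x y : ℝ) :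
    ∑ i, f (if i = j then x else y) = f x + (Fintype.card ι - 1) * f y := by
  rw [← add_sum_erase univ _ (mem_univ j), if_pos rfl,
    sum_congr rfl fun i hi => by rw [if_neg (ne_of_mem_erase hi)], sum_const,
    card_erase_of_mem (mem_univ j), card_univ, nsmul_eq_mul,
    Nat.cast_pred (Fintype.card_pos_iff.2 ⟨j⟩)]

end Fintype

theorem sum_negMulLog_sub_le_negMulLog_sum [Fintype ι] {m q : ι → ℝ} (hm : ∀ i, 0 ≤ m i)
    (hmq : ∀ i, m i ≤ q i) (hq : ∑ i, q i = 1) :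
    ∑ i, negMulLog (m i) - ∑ i, negMulLog (q i) ≤ negMulLog (∑ i, m i) := by
  have hq0 : ∀ i, 0 ≤ q i := fun i => (hm i).trans (hmq i)
  rcases (sum_nonneg fun i _ => hm i).eq_or_lt with hM | hM
  · have hm0 : ∀ i, m i = 0 := fun i =>
      (sum_eq_zero_iff_of_nonneg fun j _ => hm j).1 hM.symm i (mem_univ i)
    simp only [hm0, negMulLog_zero, sum_const_zero, zero_sub, neg_nonpos]
    exact sum_negMulLog_nonneg hq0 hq
  calc ∑ i, negMulLog (m i) - ∑ i, negMulLog (q i)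
      ≤ ∑ i, (q i * ∑ j, m j - m i - m i * log (∑ j, m j)) := by
        rw [← sum_sub_distrib]
        exact sum_le_sum fun i _ => negMulLog_sub_negMulLog_le (hm i) (hmq i)
          (apply_le_one_of_sum_eq_one hq0 hq i) hM
    _ = negMulLog (∑ i, m i) := by
        simp only [sum_sub_distrib, ← sum_mul, hq, negMulLog]
        ring

theorem qaryEntropy_eq_negMulLog (n : ℕ) (t : ℝ) :
    qaryEntropy n t = t * log (n - 1) + negMulLog t + negMulLog (1 - t) := by
  rw [qaryEntropy, binEntropy_eq_negMulLog_add_negMulLog_one_sub]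
  push_cast
  ring

theorem sum_sub_min_eq_half_sum_abs_sub [Fintype ι] {p q : ι → ℝ} (h : ∑ i, p i = ∑ i, q i) :
    ∑ i, (p i - min (p i) (q i)) = 1 / 2 * ∑ i, |p i - q i| := by
  have hpt : ∀ i, p i - min (p i) (q i) = 1 / 2 * (|p i - q i| + (p i - q i)) := by
    intro i
    rcases le_total (p i) (q i) with h | h
    · rw [min_eq_left h, abs_of_nonpos (by linarith)]; ring
    · rw [min_eq_right h, abs_of_nonneg (by linarith)]; ring
  simp only [hpt, ← mul_sum, sum_add_distrib, sum_sub_distrib, h, sub_self, add_zero]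

section Decomposition

variable [Fintype ι] [DecidableEq ι] {m a q : ι → ℝ} {j : ι}

theorem sum_negMulLog_add_sub_le_qaryEntropy (hm : ∀ i, 0 ≤ m i) (ha : ∀ i, 0 ≤ a i)
    (hmq : ∀ i, m i ≤ q i) (hq : ∑ i, q i = 1) (hma : ∑ i, m i + ∑ i, a i = 1) (haj : a j = 0) :
    ∑ i, negMulLog (m i + a i) - ∑ i, negMulLog (q i) ≤
        qaryEntropy (Fintype.card ι) (∑ i, a i) ∧
      (∑ i, negMulLog (m i + a i) - ∑ i, negMulLog (q i) =
          qaryEntropy (Fintype.card ι) (∑ i, a i) →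
        (∀ i, m i = 0 ∨ a i = 0) ∧ ∀ i ≠ j, a i = (∑ k, a k) / (Fintype.card ι - 1)) := by
  have hsum : ∑ i ∈ univ.erase j, a i = ∑ i, a i := sum_erase _ haj
  have hsumη : ∑ i ∈ univ.erase j, negMulLog (a i) = ∑ i, negMulLog (a i) :=
    sum_erase _ (by rw [haj, negMulLog_zero])
  have hcard : (#(univ.erase j) : ℝ) = Fintype.card ι - 1 := by
    rw [card_erase_of_mem (mem_univ j), card_univ, Nat.cast_pred (Fintype.card_pos_iff.2 ⟨j⟩)]
  have hsub : ∑ i, negMulLog (m i + a i) ≤ ∑ i, negMulLog (m i) + ∑ i, negMulLog (a i) := by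
    rw [← sum_add_distrib]
    exact sum_le_sum fun i _ => negMulLog_add_le (hm i) (ha i)
  have hoverlap := sum_negMulLog_sub_le_negMulLog_sum hm hmq hq
  have hexcess := sum_negMulLog_le (univ.erase j) fun i _ => ha i
  rw [hsum, hsumη, hcard] at hexcess
  rw [qaryEntropy_eq_negMulLog, show 1 - ∑ i, a i = ∑ i, m i by linarith]
  refine ⟨by linarith, fun heq => ⟨fun i => ?_, fun i hi => ?_⟩⟩
  · have htight : ∑ i, negMulLog (m i + a i) = ∑ i, (negMulLog (m i) + negMulLog (a i)) := by
      rw [sum_add_distrib]; linarith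
    rw [sum_eq_sum_iff_of_le fun i _ => negMulLog_add_le (hm i) (ha i)] at htight
    by_contra! h
    exact (negMulLog_add_lt ((hm i).lt_of_ne' h.1) ((ha i).lt_of_ne' h.2)).ne
      (htight i (mem_univ i))
  · have htight := (sum_negMulLog_eq_iff (univ.erase j) fun i _ => ha i).1
      (by rw [hsum, hsumη, hcard]; linarith)
    rw [hsum, hcard] at htight
    exact htight i (mem_erase.2 ⟨hi, mem_univ i⟩)

end Decomposition

theorem sum_negMulLog_sub_le_qaryEntropy [Fintype ι] [DecidableEq ι] {p q : ι → ℝ}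
    (hp : ∀ i, 0 ≤ p i) (hp1 : ∑ i, p i = 1) (hq : ∀ i, 0 ≤ q i) (hq1 : ∑ i, q i = 1)
    (hn : 2 ≤ Fintype.card ι) {t : ℝ} (ht : 1 / 2 * ∑ i, |p i - q i| = t) :
    ∑ i, negMulLog (p i) - ∑ i, negMulLog (q i) ≤ qaryEntropy (Fintype.card ι) t ∧
      (0 < t → ∑ i, negMulLog (p i) - ∑ i, negMulLog (q i) = qaryEntropy (Fintype.card ι) t →
        ∃ j, (∀ i, q i = if i = j then 1 else 0) ∧
          ∀ i, p i = if i = j then 1 - t else t / (Fintype.card ι - 1)) := by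
  obtain ⟨j, -, hj⟩ := exists_le_of_sum_le (nonempty_of_sum_ne_zero (hp1 ▸ one_ne_zero))
    (hp1.trans hq1.symm).le
  have hsa : ∑ i, (p i - min (p i) (q i)) = t :=
    (sum_sub_min_eq_half_sum_abs_sub (hp1.trans hq1.symm)).trans ht
  have hsm : ∑ i, min (p i) (q i) = 1 - t := by
    rw [← hsa, ← hp1, ← sum_sub_distrib]
    simp
  have hdecomp := sum_negMulLog_add_sub_le_qaryEntropy (j := j)
    (fun i => le_min (hp i) (hq i)) (fun i => sub_nonneg.2 (min_le_left (p i) (q i)))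
    (fun i => min_le_right _ _) hq1 (by rw [hsm, hsa]; ring) (by simp [min_eq_left hj])
  simp only [add_sub_cancel, hsa] at hdecomp
  refine ⟨hdecomp.1, fun htpos heq => ?_⟩
  obtain ⟨hdisj, hexcess⟩ := hdecomp.2 heq
  have hc : 0 < t / (Fintype.card ι - 1) := by
    have : (2 : ℝ) ≤ Fintype.card ι := by exact_mod_cast hn
    exact div_pos htpos (by linarith)
  have hoff : ∀ i ≠ j, min (p i) (q i) = 0 ∧ q i = 0 ∧ p i = t / (Fintype.card ι - 1) := by
    intro i hi
    have hai : p i - min (p i) (q i) ≠ 0 := (hexcess i hi).trans_ne hc.ne'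
    have hmi : min (p i) (q i) = 0 := (hdisj i).resolve_right hai
    have hqi : min (p i) (q i) = q i :=
      (min_choice _ _).resolve_left fun h => hai (by rw [h, sub_self])
    exact ⟨hmi, hqi ▸ hmi, by linarith [hexcess i hi]⟩
  have hqj : q j = 1 := by
    rw [← hq1, sum_eq_single j (fun i _ hi => (hoff i hi).2.1) (by simp)]
  have hpj : p j = 1 - t := by
    rw [← hsm, sum_eq_single j (fun i _ hi => (hoff i hi).1) (by simp), min_eq_left hj]
  refine ⟨j, fun i => ?_, fun i => ?_⟩ <;> split_ifs with hi
  exacts [hi ▸ hqj, (hoff i hi).2.1, hi ▸ hpj, (hoff i hi).2.2]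

theorem Equiv.Perm.forall_apply_eq_ite_iff {α : Type*} [DecidableEq ι] (σ : Equiv.Perm ι)
    (i₀ : ι) (f : ι → α) (x y : α) :
    (∀ i, f (σ i) = if i = i₀ then x else y) ↔ ∀ i, f i = if i = σ i₀ then x else y := by
  refine ⟨fun h i => ?_, fun h i => by simp [h]⟩
  simpa [Equiv.symm_apply_eq] using h (σ.symm i)

theorem Equiv.Perm.exists_apply_iff [DecidableEq ι] (i₀ : ι) {P : ι → Prop} :
    (∃ σ : Equiv.Perm ι, P (σ i₀)) ↔ ∃ j, P j :=
  ⟨fun ⟨σ, h⟩ => ⟨σ i₀, h⟩, fun ⟨j, h⟩ => ⟨Equiv.swap i₀ j, by rwa [Equiv.swap_apply_left]⟩⟩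

section Regimes

variable [Fintype ι] [DecidableEq ι] {p q : ι → ℝ}

theorem sum_negMulLog_sub_le_log_card (hp : ∀ i, 0 ≤ p i) (hp1 : ∑ i, p i = 1)
    (hq : ∀ i, 0 ≤ q i) (hq1 : ∑ i, q i = 1) :
    ∑ i, negMulLog (p i) - ∑ i, negMulLog (q i) ≤ log (Fintype.card ι) ∧
      (∑ i, negMulLog (p i) - ∑ i, negMulLog (q i) = log (Fintype.card ι) ↔
        (∃ j, ∀ i, q i = if i = j then 1 else 0) ∧ ∀ i, p i = 1 / Fintype.card ι) := by
  have hmax := sum_negMulLog_le_log_card hp hp1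
  have hmin := sum_negMulLog_nonneg hq hq1
  refine ⟨by linarith, fun h => ⟨?_, ?_⟩, fun ⟨hqj, hpu⟩ => ?_⟩
  · exact (sum_negMulLog_eq_zero_iff hq hq1).1 (by linarith)
  · exact (sum_negMulLog_eq_log_card_iff hp hp1).1 (by linarith)
  · rw [(sum_negMulLog_eq_zero_iff hq hq1).2 hqj, (sum_negMulLog_eq_log_card_iff hp hp1).2 hpu,
      sub_zero]

theorem sum_negMulLog_sub_le_qaryEntropy_of_lt (hp : ∀ i, 0 ≤ p i) (hp1 : ∑ i, p i = 1)
    (hq : ∀ i, 0 ≤ q i) (hq1 : ∑ i, q i = 1) (hn : 2 ≤ Fintype.card ι) {ε : ℝ} (hε : 0 < ε)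
    (hεn : ε < 1 - 1 / Fintype.card ι) (hdist : 1 / 2 * ∑ i, |p i - q i| ≤ ε) :
    ∑ i, negMulLog (p i) - ∑ i, negMulLog (q i) ≤ qaryEntropy (Fintype.card ι) ε ∧
      (∑ i, negMulLog (p i) - ∑ i, negMulLog (q i) = qaryEntropy (Fintype.card ι) ε ↔
        ∃ j, (∀ i, q i = if i = j then 1 else 0) ∧
          ∀ i, p i = if i = j then 1 - ε else ε / (Fintype.card ι - 1)) := by
  set t := 1 / 2 * ∑ i, |p i - q i|
  obtain ⟨hle, heq⟩ := sum_negMulLog_sub_le_qaryEntropy hp hp1 hq hq1 hn rfl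
  have hmono := qaryEntropy_strictMonoOn hn
  have ht : t ∈ Set.Icc (0 : ℝ) (1 - 1 / Fintype.card ι) := ⟨by positivity, hdist.trans hεn.le⟩
  have hεmem : ε ∈ Set.Icc (0 : ℝ) (1 - 1 / Fintype.card ι) := ⟨hε.le, hεn.le⟩
  have hqt : qaryEntropy (Fintype.card ι) t ≤ qaryEntropy (Fintype.card ι) ε :=
    hmono.monotoneOn ht hεmem hdist
  refine ⟨hle.trans hqt, fun h => ?_, fun ⟨j, hqj, hpj⟩ => ?_⟩
  · have htε : t = ε := hmono.injOn ht hεmem (le_antisymm hqt (h ▸ hle))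
    rw [← htε] at h ⊢
    exact heq (hε.trans_eq htε.symm) h
  · have hn1 : (Fintype.card ι : ℝ) - 1 ≠ 0 := by
      have : (2 : ℝ) ≤ Fintype.card ι := by exact_mod_cast hn
      linarith
    rw [(sum_negMulLog_eq_zero_iff hq hq1).2 ⟨j, hqj⟩, sum_congr rfl fun i _ => by rw [hpj i],
      sum_apply_ite_eq, mul_negMulLog_div hn1, qaryEntropy_eq_negMulLog]
    ring

end Regimes

theorem shEnt_eq_sum_negMulLog_div {d : ℕ} (p : Fin d → ℝ) :
    shEnt p = (∑ i, negMulLog (p i)) / log 2 := by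
  rw [shEnt, sum_div, ← sum_neg_distrib]
  refine sum_congr rfl fun i _ => ?_
  rw [logb, negMulLog]
  ring

theorem AF_eq_qaryEntropy_div {d : ℕ} {ε : ℝ} (h : ε < 1 - 1 / d) :
    AF d ε = qaryEntropy d ε / log 2 := by
  rw [AF, if_pos h, binEnt, qaryEntropy_eq_negMulLog]
  simp only [logb, negMulLog]
  ring

end

theorem classical_audenaert_fannes_general
    {d : ℕ} (hd : 2 ≤ d) (ε : ℝ) (hε : ε ∈ Set.Ioc (0 : ℝ) 1) (p q : Fin d → ℝ)
    (hp : (∀ i, 0 ≤ p i) ∧ ∑ i, p i = 1) (hq : (∀ i, 0 ≤ q i) ∧ ∑ i, q i = 1)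
    (hdist : (1 / 2 : ℝ) * ∑ i, |p i - q i| ≤ ε) :
    shEnt p - shEnt q ≤ AF d ε ∧
    (shEnt p - shEnt q = AF d ε ↔
      ∃ π : Equiv.Perm (Fin d),
        (∀ i : Fin d, q (π i) = if (i : ℕ) = 0 then 1 else 0) ∧
        ((ε < 1 - 1 / d ∧
            ∀ i : Fin d, p (π i) = if (i : ℕ) = 0 then 1 - ε else ε / ((d : ℝ) - 1)) ∨
         (1 - 1 / d ≤ ε ∧ ∀ i : Fin d, p i = 1 / d))) := by
  obtain ⟨hp0, hp1⟩ := hp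
  obtain ⟨hq0, hq1⟩ := hq
  have hlog2 : 0 < Real.log 2 := Real.log_pos one_lt_two
  set i₀ : Fin d := ⟨0, by omega⟩
  have hi₀ : ∀ i : Fin d, (i : ℕ) = 0 ↔ i = i₀ := fun i => (Fin.ext_iff (a := i) (b := i₀)).symm
  simp only [hi₀, Equiv.Perm.forall_apply_eq_ite_iff, shEnt_eq_sum_negMulLog_div, ← sub_div]
  by_cases hε' : ε < 1 - 1 / d
  · obtain ⟨hle, hiff⟩ := sum_negMulLog_sub_le_qaryEntropy_of_lt hp0 hp1 hq0 hq1
      (by simpa using hd) hε.1 (by simpa using hε') hdist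
    simp only [Fintype.card_fin] at hle hiff
    rw [AF_eq_qaryEntropy_div hε', div_le_div_iff_of_pos_right hlog2, div_left_inj' hlog2.ne',
      hiff]
    simp only [hε', not_le.2 hε', true_and, false_and, or_false]
    exact ⟨hle, (Equiv.Perm.exists_apply_iff i₀).symm⟩
  · obtain ⟨hle, hiff⟩ := sum_negMulLog_sub_le_log_card hp0 hp1 hq0 hq1
    simp only [Fintype.card_fin] at hle hiff
    rw [AF, if_neg hε', Real.logb, div_le_div_iff_of_pos_right hlog2, div_left_inj' hlog2.ne',
      hiff]
    simp only [hε', not_lt.1 hε', true_and, false_and, false_or, exists_and_right]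
    exact ⟨hle, and_congr_left' (Equiv.Perm.exists_apply_iff i₀).symm⟩

/-- Classical Audenaert–Fannes inequality with equality conditions. -/
theorem classical_audenaert_fannes
    {d : ℕ} (hd : 2 ≤ d) (ε : ℝ) (hε : ε ∈ Set.Ioc (0 : ℝ) 1) (p q : Fin d → ℝ)
    (hp : (∀ i, 0 ≤ p i) ∧ ∑ i, p i = 1) (hq : (∀ i, 0 ≤ q i) ∧ ∑ i, q i = 1)
    (hdist : (1 / 2 : ℝ) * ∑ i, |p i - q i| ≤ ε) (hH : shEnt q ≤ shEnt p) :
    shEnt p - shEnt q ≤ AF d ε ∧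
    (shEnt p - shEnt q = AF d ε ↔
      ∃ π : Equiv.Perm (Fin d),
        (∀ i : Fin d, q (π i) = if (i : ℕ) = 0 then 1 else 0) ∧
        ((ε < 1 - 1 / d ∧
            ∀ i : Fin d, p (π i) = if (i : ℕ) = 0 then 1 - ε else ε / ((d : ℝ) - 1)) ∨
         (1 - 1 / d ≤ ε ∧ ∀ i : Fin d, p i = 1 / d))) :=
  classical_audenaert_fannes_general hd ε hε p q hp hq hdist
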